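/- arXiv:1508.05563 — 7 statements merged into one kernel-verified Lean document; each statement's English description precedes it below -/
import Mathlib

section
/- Let e ∈ A_ε be a nonzero homogeneous element with ε real (⟨ε,ε⟩ = 1). Then the following are equivalent: (i) every element of the localization A_e of the form a · e^{−n}, where n ∈ ℤ and a ∈ A_α is homogeneous with ⟨ε,α⟩ = n, lies in the image of the canonical localization map restricted to the subalgebra A_{ε^⊥}; (ii) e has the projector factorization property, i.e., for every α ∈ ℤⁿ with d := ⟨ε,α⟩ > 0, every f ∈ A_α factors as f = e^d · f' with f' ∈ A_{α − d·ε} (so f' ∈ A_{ε^⊥}). -/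
theorem stmt0 {n : ℕ} {k A : Type*} [Field k] [CommRing A] [IsDomain A] [Algebra k A]
    (𝒜 : (Fin n → ℤ) → Submodule k A) [GradedAlgebra 𝒜]
    (bil : (Fin n → ℤ) →ₗ[ℤ] (Fin n → ℤ) →ₗ[ℤ] ℤ)
    (ε : Fin n → ℤ) (hreal : bil ε ε = 1)
    (e : A) (he0 : e ≠ 0) (he : e ∈ 𝒜 ε) :
    (∀ (α : Fin n → ℤ) (a : A), a ∈ 𝒜 α →
        ∃ b ∈ (⨆ γ ∈ {γ : Fin n → ℤ | bil ε γ = 0}, 𝒜 γ),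
          algebraMap A (Localization.Away e) (b * e ^ (bil ε α).toNat)
            = algebraMap A (Localization.Away e) (a * e ^ (-(bil ε α)).toNat))
    ↔ (∀ (α : Fin n → ℤ), 0 < bil ε α → ∀ f ∈ 𝒜 α,
        ∃ f' ∈ 𝒜 (α - bil ε α • ε), f = e ^ (bil ε α).toNat * f') := by
  have hinj : Function.Injective (algebraMap A (Localization.Away e)) :=
    IsLocalization.injective _ (powers_le_nonZeroDivisors_of_noZeroDivisors he0)
  constructor
  · intro H α hd f hf
    obtain ⟨b, _, heq⟩ := H α f hf
    rw [show (-(bil ε α)).toNat = 0 from Int.toNat_eq_zero.2 (by omega), pow_zero, mul_one] at heq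
    have hbe : b * e ^ (bil ε α).toNat = f := hinj heq
    have hpow : e ^ (bil ε α).toNat ∈ 𝒜 ((bil ε α).toNat • ε) := SetLike.pow_mem_graded _ he
    have hsmul : (bil ε α).toNat • ε = bil ε α • ε := by
      rw [← natCast_zsmul, Int.toNat_of_nonneg hd.le]
    rw [hsmul] at hpow
    refine ⟨(DirectSum.decompose 𝒜 b (α - bil ε α • ε) : A), Submodule.coe_mem _, ?_⟩
    have := DirectSum.coe_decompose_mul_add_of_right_mem 𝒜
      (i := α - bil ε α • ε) (a := b) hpow
    rw [sub_add_cancel, hbe, DirectSum.decompose_of_mem_same 𝒜 hf] at this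
    rw [mul_comm] at this
    exact this
  · intro H α a ha
    rcases le_or_gt (bil ε α) 0 with hd | hd
    · refine ⟨a * e ^ (-(bil ε α)).toNat, ?_, by
        rw [show (bil ε α).toNat = 0 from Int.toNat_eq_zero.2 hd, pow_zero, mul_one]⟩
      have hpow : e ^ (-(bil ε α)).toNat ∈ 𝒜 ((-(bil ε α)).toNat • ε) :=
        SetLike.pow_mem_graded _ he
      have hmem : a * e ^ (-(bil ε α)).toNat ∈ 𝒜 (α + (-(bil ε α)).toNat • ε) :=
        SetLike.mul_mem_graded ha hpow
      refine Submodule.mem_iSup_of_mem (α + (-(bil ε α)).toNat • ε)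
        (Submodule.mem_iSup_of_mem ?_ hmem)
      show bil ε (α + (-(bil ε α)).toNat • ε) = 0
      rw [map_add, ← natCast_zsmul, map_smul, Int.toNat_of_nonneg (by omega : (0:ℤ) ≤ -(bil ε α)),
        smul_eq_mul, hreal]
      ring
    · obtain ⟨f', hf', heq⟩ := H α hd a ha
      refine ⟨f', ?_, ?_⟩
      · refine Submodule.mem_iSup_of_mem (α - bil ε α • ε)
          (Submodule.mem_iSup_of_mem ?_ hf')
        show bil ε (α - bil ε α • ε) = 0
        rw [map_sub, map_smul, smul_eq_mul, hreal, mul_one, sub_self]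
      · rw [show (-(bil ε α)).toNat = 0 from Int.toNat_eq_zero.2 (by omega), pow_zero, mul_one,
          heq, mul_comm]
end

section
/- Suppose ε ∈ ℤⁿ is real (⟨ε,ε⟩ = 1), e ∈ A_ε is nonzero with the projector factorization property, every nonzero element of A_0 is a unit of A, and the support of the grading is pointed (if A_α ≠ 0 and A_{−α} ≠ 0 then α = 0). Then every nonzero f ∈ A_ε is irreducible in A (f is not a unit, and in any factorization f = g·h one of g, h is a unit). -/
/-!
In a domain graded by a linearly ordered cancellative monoid (such as `ℤⁿ` with the
lexicographic order), the factors of a nonzero homogeneous element are homogeneous: the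
components of `g * h` in the degrees `max g + max h` and `min g + min h` are products of nonzero
components, so both degrees equal `deg (g * h)`, which forces `min = max` for `g` and for `h`.

So if `f = g * h` with `f ∈ A_ε`, then `g ∈ A_β`, `h ∈ A_γ` with `β + γ = ε`, hence
`⟨ε, β⟩ + ⟨ε, γ⟩ = 1` and one pairing, say `d = ⟨ε, β⟩`, is positive. Projector factorization
gives `g = e ^ d * g'` and `f = e * u` with `u ∈ A_0`, a unit; cancelling `e` shows that `h`
divides `u`. Finally `f` is not a unit: its inverse would be homogeneous of degree `-ε`, and
pointedness would force `ε = 0`, contradicting `⟨ε, ε⟩ = 1`.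
-/

open DirectSum SetLike

section Decomposition

variable {ι M σ : Type*} [DecidableEq ι] [AddCommMonoid M] [SetLike σ M] [AddSubmonoidClass σ M]
  (ℳ : ι → σ) [Decomposition ℳ] [∀ (i : ι) (x : ℳ i), Decidable (x ≠ 0)]

theorem DirectSum.mem_of_support_decompose_subset_singleton {x : M} {i : ι}
    (h : (decompose ℳ x).support ⊆ {i}) : x ∈ ℳ i := by
  rw [← sum_support_decompose ℳ x, Finset.sum_eq_single i]
  · exact (decompose ℳ x i).2
  · exact fun j hj hji => absurd (Finset.mem_singleton.mp (h hj)) hji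
  · intro hi
    rw [DFinsupp.notMem_support_iff.mp hi, ZeroMemClass.coe_zero]

end Decomposition

section GradedRing

variable {ι A σ : Type*} [DecidableEq ι] [Semiring A] [SetLike σ A] [AddSubmonoidClass σ A]
  (𝒜 : ι → σ)

theorem DirectSum.coe_decompose_mul_add_of_forall_ne [AddMonoid ι] [GradedRing 𝒜]
    [∀ (i : ι) (x : 𝒜 i), Decidable (x ≠ 0)] {a b : A} {i j : ι}
    (h : ∀ i' ∈ (decompose 𝒜 a).support, ∀ j' ∈ (decompose 𝒜 b).support,
      i' + j' = i + j → i' = i ∧ j' = j) :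
    (decompose 𝒜 (a * b) (i + j) : A) = decompose 𝒜 a i * decompose 𝒜 b j := by
  rw [decompose_mul, coe_mul_apply, Finset.sum_eq_single (i, j)]
  · rintro ⟨i', j'⟩ hmem hne
    simp only [Finset.mem_filter, Finset.mem_product] at hmem
    obtain ⟨rfl, rfl⟩ := h i' hmem.1.1 j' hmem.1.2 hmem.2
    exact absurd rfl hne
  · intro hnot
    simp only [Finset.mem_filter, Finset.mem_product, and_true, not_and_or,
      DFinsupp.notMem_support_iff] at hnot
    rcases hnot with h0 | h0 <;> simp [h0]

variable {𝒜}

theorem SetLike.IsHomogeneousElem.of_mul [AddCommMonoid ι] [LinearOrder ι]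
    [IsOrderedCancelAddMonoid ι] [GradedRing 𝒜] [NoZeroDivisors A] {a b : A}
    (ha : a ≠ 0) (hb : b ≠ 0) (hab : IsHomogeneousElem 𝒜 (a * b)) :
    IsHomogeneousElem 𝒜 a ∧ IsHomogeneousElem 𝒜 b := by
  classical
  obtain ⟨ε, hε⟩ := hab
  have support_nonempty {x : A} (hx : x ≠ 0) : (decompose 𝒜 x).support.Nonempty := by
    contrapose! hx
    rw [← sum_support_decompose 𝒜 x, hx, Finset.sum_empty]
  set sa := (decompose 𝒜 a).support
  set sb := (decompose 𝒜 b).support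
  have degree_eq {i j : ι} (hi : i ∈ sa) (hj : j ∈ sb)
      (huniq : ∀ i' ∈ sa, ∀ j' ∈ sb, i' + j' = i + j → i' = i ∧ j' = j) : i + j = ε := by
    by_contra hne
    have hprod := coe_decompose_mul_add_of_forall_ne 𝒜 huniq
    rw [decompose_of_mem_ne 𝒜 hε (Ne.symm hne)] at hprod
    exact mul_ne_zero (ZeroMemClass.coe_eq_zero.not.mpr (DFinsupp.mem_support_iff.mp hi))
      (ZeroMemClass.coe_eq_zero.not.mpr (DFinsupp.mem_support_iff.mp hj)) hprod.symm
  have hsa := support_nonempty ha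
  have hsb := support_nonempty hb
  have hmax := degree_eq (sa.max'_mem hsa) (sb.max'_mem hsb) fun i' hi' j' hj' h =>
    (add_eq_add_iff_eq_and_eq (sa.le_max' i' hi') (sb.le_max' j' hj')).mp h
  have hmin := degree_eq (sa.min'_mem hsa) (sb.min'_mem hsb) fun i' hi' j' hj' h =>
    ((add_eq_add_iff_eq_and_eq (sa.min'_le i' hi') (sb.min'_le j' hj')).mp h.symm).imp
      Eq.symm Eq.symm
  obtain ⟨hsa', hsb'⟩ := (add_eq_add_iff_eq_and_eq (sa.min'_le_max' hsa) (sb.min'_le_max' hsb)).mp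
    (hmin.trans hmax.symm)
  have subset_singleton {s : Finset ι} (hs : s.Nonempty) (h : s.min' hs = s.max' hs) :
      s ⊆ {s.max' hs} := fun i hi =>
    Finset.mem_singleton.mpr (le_antisymm (s.le_max' i hi) (h ▸ s.min'_le i hi))
  exact ⟨⟨_, mem_of_support_decompose_subset_singleton 𝒜 (subset_singleton hsa hsa')⟩,
    ⟨_, mem_of_support_decompose_subset_singleton 𝒜 (subset_singleton hsb hsb')⟩⟩

theorem SetLike.IsHomogeneousElem.of_mul_of_pi_int {n : ℕ} {𝒜 : (Fin n → ℤ) → σ}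
    [GradedRing 𝒜] [NoZeroDivisors A] {a b : A}
    (ha : a ≠ 0) (hb : b ≠ 0) (hab : IsHomogeneousElem 𝒜 (a * b)) :
    IsHomogeneousElem 𝒜 a ∧ IsHomogeneousElem 𝒜 b := by
  let _ : GradedRing fun i : Lex (Fin n → ℤ) => 𝒜 (ofLex i) := ‹GradedRing 𝒜›
  have lex_iff {x : A} : IsHomogeneousElem (fun i : Lex (Fin n → ℤ) => 𝒜 (ofLex i)) x ↔
      IsHomogeneousElem 𝒜 x :=
    ⟨fun ⟨i, hi⟩ => ⟨ofLex i, hi⟩, fun ⟨i, hi⟩ => ⟨toLex i, hi⟩⟩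
  simpa only [lex_iff] using of_mul ha hb (lex_iff.mpr hab)

end GradedRing

section ProjectorFactorization

variable {ι A σ : Type*} [AddCommGroup ι] [CommSemiring A] [SetLike σ A]
  (𝒜 : ι → σ) (bil : ι →ₗ[ℤ] ι →ₗ[ℤ] ℤ)

def HasProjectorFactorization (ε : ι) (e : A) : Prop :=
  ∀ α : ι, 0 < bil ε α → ∀ f ∈ 𝒜 α, ∃ f' ∈ 𝒜 (α - bil ε α • ε), f = e ^ (bil ε α).toNat * f'

variable {𝒜 bil} {ε : ι} {e : A}

theorem HasProjectorFactorization.exists_isUnit_mul_eq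
    (hproj : HasProjectorFactorization 𝒜 bil ε e) (hreal : bil ε ε = 1)
    (hunit : ∀ a ∈ 𝒜 0, a ≠ 0 → IsUnit a) {f : A} (hf : f ∈ 𝒜 ε) (hf0 : f ≠ 0) :
    ∃ u, IsUnit u ∧ f = e * u := by
  obtain ⟨u, hu, rfl⟩ := hproj ε (by rw [hreal]; exact one_pos) f hf
  rw [hreal, one_smul, sub_self] at hu
  rw [hreal, Int.toNat_one, pow_one] at hf0 ⊢
  exact ⟨u, hunit u hu (right_ne_zero_of_mul hf0), rfl⟩

theorem HasProjectorFactorization.isUnit_right_of_mul_eq [IsDomain A]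
    (hproj : HasProjectorFactorization 𝒜 bil ε e) (hreal : bil ε ε = 1) (he0 : e ≠ 0)
    (hunit : ∀ a ∈ 𝒜 0, a ≠ 0 → IsUnit a) {f g h : A} (hf : f ∈ 𝒜 ε) (hf0 : f ≠ 0)
    (hfgh : f = g * h) {β : ι} (hg : g ∈ 𝒜 β) (hβ : 0 < bil ε β) : IsUnit h := by
  obtain ⟨u, hu, rfl⟩ := hproj.exists_isUnit_mul_eq hreal hunit hf hf0
  obtain ⟨g', -, rfl⟩ := hproj β hβ g hg
  obtain ⟨d, hd⟩ : ∃ d, (bil ε β).toNat = d + 1 := ⟨_, (Nat.sub_add_cancel (by omega)).symm⟩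
  have hu_eq : u = e ^ d * g' * h :=
    mul_left_cancel₀ he0 (by rw [hfgh, hd, pow_succ']; ring)
  exact isUnit_of_mul_isUnit_right (hu_eq ▸ hu)

end ProjectorFactorization

theorem not_isUnit_of_mem_of_ne_zero {n : ℕ} {k A : Type*} [CommSemiring k] [Semiring A]
    [IsDomain A] [Algebra k A] {𝒜 : (Fin n → ℤ) → Submodule k A} [GradedAlgebra 𝒜]
    (hpointed : ∀ α : Fin n → ℤ, 𝒜 α ≠ ⊥ → 𝒜 (-α) ≠ ⊥ → α = 0)
    {α : Fin n → ℤ} (hα : α ≠ 0) {x : A} (hx : x ∈ 𝒜 α) (hx0 : x ≠ 0) : ¬IsUnit x := by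
  intro hu
  obtain ⟨y, hy⟩ := hu.exists_right_inv
  have hy0 : y ≠ 0 := right_ne_zero_of_mul (hy ▸ one_ne_zero)
  have hxy : x * y ∈ 𝒜 0 := hy ▸ SetLike.GradedOne.one_mem
  obtain ⟨-, γ, hyγ⟩ := IsHomogeneousElem.of_mul_of_pi_int hx0 hy0 ⟨0, hxy⟩
  have hγ : -α = γ := neg_eq_of_add_eq_zero_right <|
    degree_eq_of_mem_mem 𝒜 (mul_mem_graded hx hyγ) hxy (hy ▸ one_ne_zero)
  refine hα (hpointed α ((Submodule.ne_bot_iff _).mpr ⟨x, hx, hx0⟩) ?_)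
  exact hγ ▸ (Submodule.ne_bot_iff _).mpr ⟨y, hyγ, hy0⟩

theorem stmt2_general {n : ℕ} {k A : Type*} [Field k] [CommRing A] [IsDomain A] [Algebra k A]
    (𝒜 : (Fin n → ℤ) → Submodule k A) [GradedAlgebra 𝒜]
    (bil : (Fin n → ℤ) →ₗ[ℤ] (Fin n → ℤ) →ₗ[ℤ] ℤ)
    (ε : Fin n → ℤ) (hreal : bil ε ε = 1)
    (e : A) (he0 : e ≠ 0)
    (hproj : ∀ (α : Fin n → ℤ), 0 < bil ε α → ∀ f ∈ 𝒜 α,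
        ∃ f' ∈ 𝒜 (α - bil ε α • ε), f = e ^ (bil ε α).toNat * f')
    (hunit : ∀ a ∈ 𝒜 (0 : Fin n → ℤ), a ≠ 0 → IsUnit a)
    (hpointed : ∀ α : Fin n → ℤ, 𝒜 α ≠ ⊥ → 𝒜 (-α) ≠ ⊥ → α = 0) :
    ∀ f ∈ 𝒜 ε, f ≠ 0 → Irreducible f := by
  have hproj : HasProjectorFactorization 𝒜 bil ε e := hproj
  have hε : ε ≠ 0 := fun h => by simp [h] at hreal
  intro f hf hf0
  refine ⟨not_isUnit_of_mem_of_ne_zero hpointed hε hf hf0, fun g h hfgh => ?_⟩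
  obtain ⟨hg0, hh0⟩ := mul_ne_zero_iff.mp (hfgh ▸ hf0)
  obtain ⟨⟨β, hg⟩, γ, hh⟩ := IsHomogeneousElem.of_mul_of_pi_int hg0 hh0 ⟨ε, hfgh ▸ hf⟩
  have hβγ : bil ε β + bil ε γ = 1 := by
    rw [← map_add, ← hreal,
      degree_eq_of_mem_mem 𝒜 (mul_mem_graded hg hh) (hfgh ▸ hf) (hfgh ▸ hf0)]
  rcases lt_or_ge 0 (bil ε β) with hβ | hβ
  · exact .inr (hproj.isUnit_right_of_mul_eq hreal he0 hunit hf hf0 hfgh hg hβ)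
  · exact .inl (hproj.isUnit_right_of_mul_eq hreal he0 hunit hf hf0 (hfgh.trans (mul_comm g h))
      hh (by omega))

theorem stmt2 {n : ℕ} {k A : Type*} [Field k] [CommRing A] [IsDomain A] [Algebra k A]
    (𝒜 : (Fin n → ℤ) → Submodule k A) [GradedAlgebra 𝒜]
    (bil : (Fin n → ℤ) →ₗ[ℤ] (Fin n → ℤ) →ₗ[ℤ] ℤ)
    (ε : Fin n → ℤ) (hreal : bil ε ε = 1)
    (e : A) (he0 : e ≠ 0) (he : e ∈ 𝒜 ε)
    (hproj : ∀ (α : Fin n → ℤ), 0 < bil ε α → ∀ f ∈ 𝒜 α,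
        ∃ f' ∈ 𝒜 (α - bil ε α • ε), f = e ^ (bil ε α).toNat * f')
    (hunit : ∀ a ∈ 𝒜 (0 : Fin n → ℤ), a ≠ 0 → IsUnit a)
    (hpointed : ∀ α : Fin n → ℤ, 𝒜 α ≠ ⊥ → 𝒜 (-α) ≠ ⊥ → α = 0) :
    ∀ f ∈ 𝒜 ε, f ≠ 0 → Irreducible f :=
  stmt2_general 𝒜 bil ε hreal e he0 hproj hunit hpointed
end

section
/- Suppose ε ∈ ℤⁿ is real (⟨ε,ε⟩ = 1), e ∈ A_ε is nonzero with the projector factorization property, A is a unique factorization domain, A_0 = k·1, every unit of A lies in A_0, and the support of the grading is pointed. Then ε is extremal in the cone spanned by the support: whenever α, β ∈ ℤⁿ satisfy A_α ≠ 0, A_β ≠ 0 and α + β = n·ε for some n ∈ ℕ, one has α = ⟨ε,α⟩·ε and β = ⟨ε,β⟩·ε, with ⟨ε,α⟩ ≥ 0 and ⟨ε,β⟩ ≥ 0. -/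
theorem stmt3 {n : ℕ} {k A : Type*} [Field k] [CommRing A] [IsDomain A] [Algebra k A]
    [UniqueFactorizationMonoid A]
    (𝒜 : (Fin n → ℤ) → Submodule k A) [GradedAlgebra 𝒜]
    (bil : (Fin n → ℤ) →ₗ[ℤ] (Fin n → ℤ) →ₗ[ℤ] ℤ)
    (ε : Fin n → ℤ) (hreal : bil ε ε = 1)
    (e : A) (he0 : e ≠ 0) (he : e ∈ 𝒜 ε)
    (hproj : ∀ (α : Fin n → ℤ), 0 < bil ε α → ∀ f ∈ 𝒜 α,
        ∃ f' ∈ 𝒜 (α - bil ε α • ε), f = e ^ (bil ε α).toNat * f')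
    (h0 : 𝒜 (0 : Fin n → ℤ) = Submodule.span k {(1 : A)})
    (hunits : ∀ u : A, IsUnit u → u ∈ 𝒜 (0 : Fin n → ℤ))
    (hpointed : ∀ α : Fin n → ℤ, 𝒜 α ≠ ⊥ → 𝒜 (-α) ≠ ⊥ → α = 0) :
    ∀ (α β : Fin n → ℤ) (m : ℕ), 𝒜 α ≠ ⊥ → 𝒜 β ≠ ⊥ → α + β = (m : ℤ) • ε →
      α = bil ε α • ε ∧ β = bil ε β • ε ∧ 0 ≤ bil ε α ∧ 0 ≤ bil ε β := by
  -- if a nonzero element lies in two graded pieces, the degrees agree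
  have hmem0 : ∀ (γ : Fin n → ℤ) (x : A), x ≠ 0 → x ∈ 𝒜 γ → x ∈ 𝒜 0 → γ = 0 := by
    intro γ x hx hγ hx0
    by_contra hne
    have h1 : (DirectSum.decompose 𝒜 x γ : A) = x := DirectSum.decompose_of_mem_same 𝒜 hγ
    have h2 : ((DirectSum.decompose 𝒜 x γ : 𝒜 γ) : A) = 0 :=
      DirectSum.decompose_of_mem_ne 𝒜 hx0 (fun h => hne h.symm)
    exact hx (h1.symm.trans h2)
  -- a unit sitting in a graded piece forces degree 0
  have hunitdeg : ∀ (γ : Fin n → ℤ) (x : A), IsUnit x → x ∈ 𝒜 γ → γ = 0 := by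
    intro γ x hx hγ
    exact hmem0 γ x hx.ne_zero hγ (hunits x hx)
  -- nonzero elements of 𝒜 0 are units
  have hA0unit : ∀ x : A, x ∈ 𝒜 0 → x ≠ 0 → IsUnit x := by
    intro x hx hx0
    rw [h0, Submodule.mem_span_singleton] at hx
    obtain ⟨c, rfl⟩ := hx
    have hc : c ≠ 0 := by rintro rfl; simp at hx0
    have : (c • (1 : A)) = algebraMap k A c := (Algebra.algebraMap_eq_smul_one c).symm
    rw [this]
    exact (isUnit_iff_ne_zero.mpr hc).map (algebraMap k A)
  -- computation of the pairing against m • ε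
  have hbm : ∀ m : ℕ, bil ε ((m : ℤ) • ε) = m := by
    intro m
    rw [map_smul, hreal, smul_eq_mul, mul_one]
  intro α β m hα hβ hsum
  obtain ⟨f, hf, hf0⟩ := (Submodule.ne_bot_iff _).mp hα
  obtain ⟨g, hg, hg0⟩ := (Submodule.ne_bot_iff _).mp hβ
  have habm : bil ε α + bil ε β = m := by
    have := congrArg (bil ε) hsum
    rw [map_add, hbm] at this
    exact this
  -- f * g is a unit multiple of e^m
  have hfg : f * g ∈ 𝒜 ((m : ℤ) • ε) := hsum ▸ SetLike.mul_mem_graded hf hg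
  obtain ⟨h, hhu, hfgh⟩ : ∃ h : A, IsUnit h ∧ f * g = e ^ m * h := by
    rcases Nat.eq_zero_or_pos m with hm | hm
    · subst hm
      have : f * g ∈ 𝒜 0 := by simpa using hfg
      exact ⟨f * g, hA0unit _ this (mul_ne_zero hf0 hg0), by simp⟩
    · have hd : 0 < bil ε ((m : ℤ) • ε) := by rw [hbm]; exact_mod_cast hm
      obtain ⟨h, hh, heq⟩ := hproj _ hd _ hfg
      rw [hbm] at heq hh
      have hm' : ((m : ℤ)).toNat = m := Int.toNat_natCast m
      rw [hm'] at heq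
      have hh0 : (m : ℤ) • ε - (m : ℤ) • ε = 0 := sub_self _
      rw [hh0] at hh
      refine ⟨h, hA0unit h hh ?_, heq⟩
      rintro rfl
      rw [mul_zero] at heq
      exact mul_ne_zero hf0 hg0 heq
  -- key claim: if the pairing with ε is ≤ 0 then the degree is 0
  have key : ∀ (α' β' : Fin n → ℤ) (f' g' : A), f' ≠ 0 → f' ∈ 𝒜 α' → g' ∈ 𝒜 β' →
      α' + β' = α + β → f' * g' = f * g → bil ε α' ≤ 0 → α' = 0 := by
    intro α' β' p q hp0 hp hq hsum' hpq ha
    have hb : bil ε β' = m - bil ε α' := by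
      have : bil ε α' + bil ε β' = m := by
        have := congrArg (bil ε) (hsum'.trans hsum)
        rw [map_add, hbm] at this
        exact this
      omega
    have hbpos : (m : ℤ) ≤ bil ε β' := by omega
    rcases lt_or_eq_of_le (le_trans (Int.natCast_nonneg m) hbpos) with hb0 | hb0
    · -- bil ε β' > 0 : factor q
      obtain ⟨q', hq', hqeq⟩ := hproj β' hb0 q hq
      have hsplit : e ^ ((bil ε β').toNat) = e ^ m * e ^ ((bil ε β').toNat - m) := by
        rw [← pow_add]; congr 1; omega
      have : e ^ m * (p * (e ^ ((bil ε β').toNat - m) * q')) = e ^ m * h := by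
        rw [← hfgh, ← hpq, hqeq, hsplit]; ring
      have hcancel : p * (e ^ ((bil ε β').toNat - m) * q') = h :=
        mul_left_cancel₀ (pow_ne_zero m he0) this
      have hpu : IsUnit p := isUnit_of_mul_isUnit_left (hcancel ▸ hhu)
      exact hunitdeg α' p hpu hp
    · -- bil ε β' = 0 forces m = 0, so f*g = h is a unit
      have hm0 : m = 0 := by omega
      have : p * q = h := by rw [hpq, hfgh, hm0]; ring
      have hu : IsUnit (p * q) := this ▸ hhu
      exact hunitdeg α' p (isUnit_of_mul_isUnit_left hu) hp
  rcases le_or_gt (bil ε α) 0 with ha | ha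
  · have hα0 : α = 0 := key α β f g hf0 hf hg rfl rfl ha
    have hβ' : β = (m : ℤ) • ε := by rw [hα0, zero_add] at hsum; exact hsum
    have ha0 : bil ε α = 0 := by rw [hα0]; simp
    have hbval : bil ε β = m := by rw [hβ', hbm]
    exact ⟨by rw [ha0, zero_smul, hα0], by rw [hbval, ← hβ'],
      le_of_eq ha0.symm, by rw [hbval]; exact_mod_cast Nat.zero_le m⟩
  · rcases le_or_gt (bil ε β) 0 with hb | hb
    · have hβ0 : β = 0 := key β α g f hg0 hg hf (add_comm β α) (mul_comm g f) hb
      have hα' : α = (m : ℤ) • ε := by rw [hβ0, add_zero] at hsum; exact hsum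
      have hb0 : bil ε β = 0 := by rw [hβ0]; simp
      have haval : bil ε α = m := by rw [hα', hbm]
      exact ⟨by rw [haval, ← hα'], by rw [hb0, zero_smul, hβ0],
        by rw [haval]; exact_mod_cast Nat.zero_le m, le_of_eq hb0.symm⟩
    · -- both positive
      obtain ⟨f', hf', hfeq⟩ := hproj α ha f hf
      obtain ⟨g', hg', hgeq⟩ := hproj β hb g hg
      have htn : (bil ε α).toNat + (bil ε β).toNat = m := by omega
      have : e ^ m * (f' * g') = e ^ m * h := by
        rw [← hfgh, hfeq, hgeq, ← htn, pow_add]; ring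
      have hcancel : f' * g' = h := mul_left_cancel₀ (pow_ne_zero m he0) this
      have hu : IsUnit (f' * g') := hcancel ▸ hhu
      have hfu : IsUnit f' := isUnit_of_mul_isUnit_left hu
      have hgu : IsUnit g' := isUnit_of_mul_isUnit_left (mul_comm f' g' ▸ hu)
      have hαe : α - bil ε α • ε = 0 := hunitdeg _ f' hfu hf'
      have hβe : β - bil ε β • ε = 0 := hunitdeg _ g' hgu hg'
      exact ⟨sub_eq_zero.mp hαe, sub_eq_zero.mp hβe, le_of_lt ha, le_of_lt hb⟩
end

section
/- Let e ∈ A_ε be nonzero homogeneous. There is a unique k-algebra homomorphism ℓ_e : A → A_e (the localization of A at powers of e) such that for every α ∈ ℤⁿ and every a ∈ A_α, ℓ_e(a) equals the image of a in A_e multiplied by the ⟨ε,α⟩-th negative power of the image of e (i.e., ℓ_e(a) = a·e^{−⟨ε,α⟩} in A_e). Moreover ℓ_e agrees with the canonical localization map A → A_e on the subalgebra A_{ε^⊥}, and the image of ℓ_e is the k-linear span of the elements a·e^{−n} of A_e with n ∈ ℤ, a ∈ A_α homogeneous and ⟨ε,α⟩ = n. -/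
/-!
Twisting the canonical map `A → A_e` on each graded piece `A_α` by the unit `e ^ (-⟨ε, α⟩)`
respects products because `α ↦ ⟨ε, α⟩` is additive, so the twisted pieces assemble, through
the decomposition `A ≃ ⨁ α, A_α`, into an algebra map. An algebra map out of a graded algebra is
determined by its values on homogeneous elements, and its range is spanned by their images.
-/

open DirectSum

theorem LinearMap.range_eq_span_image_decompose {ι R M N : Type*} [DecidableEq ι]
    [CommSemiring R] [AddCommMonoid M] [Module R M] [AddCommMonoid N] [Module R N]
    (ℳ : ι → Submodule R M) [Decomposition ℳ] (g : M →ₗ[R] N) :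
    LinearMap.range g = Submodule.span R {x | ∃ i, ∃ m ∈ ℳ i, g m = x} := by
  rw [LinearMap.range_eq_map, ← (Decomposition.isInternal ℳ).submodule_iSup_eq_top,
    Submodule.map_iSup, Submodule.iSup_eq_span]
  congr 1
  ext x
  simp

theorem Units.mul_pow_toNat_eq_iff {M : Type*} [Monoid M] (u : Mˣ) (m : ℤ) (x y : M) :
    x * (u : M) ^ m.toNat = y * (u : M) ^ (-m).toNat ↔ x = y * ↑(u ^ (-m)) := by
  have hpow : u ^ (-m).toNat * (u ^ m.toNat)⁻¹ = u ^ (-m) := by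
    rw [← zpow_natCast, ← zpow_natCast, ← zpow_neg, ← zpow_add]
    congr 1
    omega
  rw [← Units.val_pow_eq_pow_val, ← Units.val_pow_eq_pow_val, ← Units.eq_mul_inv_iff_mul_eq,
    mul_assoc, ← Units.val_mul, hpow]

namespace GradedAlgebra

variable {ι R A : Type*} [DecidableEq ι] [AddCommMonoid ι] [CommSemiring R] [Semiring A]
  [Algebra R A] (𝒜 : ι → Submodule R A) [GradedAlgebra 𝒜]

theorem algHom_ext {B : Type*} [Semiring B] [Algebra R B] ⦃f g : A →ₐ[R] B⦄
    (h : ∀ i, ∀ a ∈ 𝒜 i, f a = g a) : f = g :=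
  AlgHom.toLinearMap_injective <|
    DirectSum.decompose_lhom_ext 𝒜 fun i => LinearMap.ext fun a => h i a a.2

variable {B : Type*} [CommSemiring B] [Algebra R B] (f : A →ₐ[R] B) (φ : ι →+ ℤ) (u : Bˣ)

def twist : A →ₐ[R] B :=
  (DirectSum.toAlgebra R _
    (fun i => (LinearMap.mulRight R (↑(u ^ φ i) : B)).comp (f.toLinearMap.comp (𝒜 i).subtype))
    (by simp)
    (fun {i j} a b => by
      simp only [LinearMap.comp_apply, Submodule.subtype_apply, SetLike.coe_gMul, map_add,
        zpow_add, Units.val_mul, LinearMap.mulRight_apply, AlgHom.toLinearMap_apply, map_mul]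
      ring)).comp
    (decomposeAlgEquiv 𝒜).toAlgHom

variable {𝒜}

theorem twist_apply_of_mem {i : ι} {a : A} (ha : a ∈ 𝒜 i) :
    twist 𝒜 f φ u a = f a * ↑(u ^ φ i) := by
  have hdec : decompose 𝒜 a = of (fun i => 𝒜 i) i ⟨a, ha⟩ := decompose_of_mem 𝒜 ha
  rw [twist, AlgHom.comp_apply, AlgEquiv.toAlgHom_apply, decomposeAlgEquiv_apply, hdec,
    toAlgebra_apply]
  exact toSemiring_of _ _ _ _ _

theorem eq_twist_iff (g : A →ₐ[R] B) :
    g = twist 𝒜 f φ u ↔ ∀ i, ∀ a ∈ 𝒜 i, g a = f a * ↑(u ^ φ i) := by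
  refine ⟨fun h i a ha => h ▸ twist_apply_of_mem f φ u ha, fun h => algHom_ext 𝒜 ?_⟩
  intro i a ha
  rw [h i a ha, twist_apply_of_mem f φ u ha]

theorem twist_apply_of_mem_iSup_ker {a : A} (ha : a ∈ ⨆ i ∈ {i | φ i = 0}, 𝒜 i) :
    twist 𝒜 f φ u a = f a := by
  refine (iSup₂_le fun i hi b hb => ?_ : _ ≤ LinearMap.eqLocus (twist 𝒜 f φ u).toLinearMap
    f.toLinearMap) ha
  simp [LinearMap.mem_eqLocus, twist_apply_of_mem f φ u hb, show φ i = 0 from hi]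

theorem range_twist :
    Set.range (twist 𝒜 f φ u) =
      Submodule.span R {x | ∃ i, ∃ a ∈ 𝒜 i, f a * ↑(u ^ φ i) = x} := by
  rw [← (twist 𝒜 f φ u).coe_toLinearMap, ← LinearMap.coe_range,
    LinearMap.range_eq_span_image_decompose 𝒜]
  congr 2
  ext x
  refine exists_congr fun i => exists_congr fun a => and_congr_right fun ha => ?_
  rw [AlgHom.toLinearMap_apply, twist_apply_of_mem f φ u ha]

end GradedAlgebra

theorem stmt4_general {n : ℕ} {k A : Type*} [Field k] [CommRing A] [Algebra k A]
    (𝒜 : (Fin n → ℤ) → Submodule k A) [GradedAlgebra 𝒜]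
    (bil : (Fin n → ℤ) →ₗ[ℤ] (Fin n → ℤ) →ₗ[ℤ] ℤ)
    (ε : Fin n → ℤ)
    (e : A) :
    ∃ ℓ : A →ₐ[k] Localization.Away e,
      ((∀ (α : Fin n → ℤ) (a : A), a ∈ 𝒜 α →
          ℓ a * (algebraMap A (Localization.Away e) e) ^ (bil ε α).toNat
            = algebraMap A (Localization.Away e) a
              * (algebraMap A (Localization.Away e) e) ^ (-(bil ε α)).toNat)
        ∧ (∀ a ∈ (⨆ γ ∈ {γ : Fin n → ℤ | bil ε γ = 0}, 𝒜 γ),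
            ℓ a = algebraMap A (Localization.Away e) a)
        ∧ Set.range ⇑ℓ = (Submodule.span k {x : Localization.Away e |
            ∃ (α : Fin n → ℤ) (a : A), a ∈ 𝒜 α ∧
              x * (algebraMap A (Localization.Away e) e) ^ (bil ε α).toNat
                = algebraMap A (Localization.Away e) a
                  * (algebraMap A (Localization.Away e) e) ^ (-(bil ε α)).toNat} : Set _))
      ∧ ∀ ℓ' : A →ₐ[k] Localization.Away e,
          (∀ (α : Fin n → ℤ) (a : A), a ∈ 𝒜 α →
            ℓ' a * (algebraMap A (Localization.Away e) e) ^ (bil ε α).toNat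
              = algebraMap A (Localization.Away e) a
                * (algebraMap A (Localization.Away e) e) ^ (-(bil ε α)).toNat) → ℓ' = ℓ := by
  set L := Localization.Away e
  set u : Lˣ := (IsLocalization.Away.algebraMap_isUnit (S := L) e).unit
  have hu : (u : L) = algebraMap A L e := IsUnit.unit_spec _
  set φ : (Fin n → ℤ) →+ ℤ := -(bil ε).toAddMonoidHom
  have hφ : ∀ α, φ α = -(bil ε α) := fun _ => rfl
  set f := IsScalarTower.toAlgHom k A L
  have hfu : ∀ α a x, x * (algebraMap A L e) ^ (bil ε α).toNat
      = algebraMap A L a * (algebraMap A L e) ^ (-(bil ε α)).toNat ↔ x = f a * ↑(u ^ φ α) := by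
    intro α a x
    rw [← hu, Units.mul_pow_toNat_eq_iff, hφ, IsScalarTower.toAlgHom_apply]
  have hchar : ∀ ℓ' : A →ₐ[k] L, (∀ α a, a ∈ 𝒜 α → ℓ' a * (algebraMap A L e) ^ (bil ε α).toNat
      = algebraMap A L a * (algebraMap A L e) ^ (-(bil ε α)).toNat) ↔
      ℓ' = GradedAlgebra.twist 𝒜 f φ u := by
    intro ℓ'
    simp only [hfu, GradedAlgebra.eq_twist_iff]
  refine ⟨GradedAlgebra.twist 𝒜 f φ u, ⟨(hchar _).mpr rfl, fun a ha => ?_, ?_⟩,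
    fun ℓ' hℓ' => (hchar ℓ').mp hℓ'⟩
  · exact GradedAlgebra.twist_apply_of_mem_iSup_ker f φ u (by simpa [hφ] using ha)
  · rw [GradedAlgebra.range_twist]
    congr 2
    ext x
    exact exists_congr fun α => exists_congr fun a => and_congr_right fun _ =>
      eq_comm.trans (hfu α a x).symm

theorem stmt4 {n : ℕ} {k A : Type*} [Field k] [CommRing A] [IsDomain A] [Algebra k A]
    (𝒜 : (Fin n → ℤ) → Submodule k A) [GradedAlgebra 𝒜]
    (bil : (Fin n → ℤ) →ₗ[ℤ] (Fin n → ℤ) →ₗ[ℤ] ℤ)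
    (ε : Fin n → ℤ)
    (e : A) (he0 : e ≠ 0) (he : e ∈ 𝒜 ε) :
    ∃ ℓ : A →ₐ[k] Localization.Away e,
      ((∀ (α : Fin n → ℤ) (a : A), a ∈ 𝒜 α →
          ℓ a * (algebraMap A (Localization.Away e) e) ^ (bil ε α).toNat
            = algebraMap A (Localization.Away e) a
              * (algebraMap A (Localization.Away e) e) ^ (-(bil ε α)).toNat)
        ∧ (∀ a ∈ (⨆ γ ∈ {γ : Fin n → ℤ | bil ε γ = 0}, 𝒜 γ),
            ℓ a = algebraMap A (Localization.Away e) a)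
        ∧ Set.range ⇑ℓ = (Submodule.span k {x : Localization.Away e |
            ∃ (α : Fin n → ℤ) (a : A), a ∈ 𝒜 α ∧
              x * (algebraMap A (Localization.Away e) e) ^ (bil ε α).toNat
                = algebraMap A (Localization.Away e) a
                  * (algebraMap A (Localization.Away e) e) ^ (-(bil ε α)).toNat} : Set _))
      ∧ ∀ ℓ' : A →ₐ[k] Localization.Away e,
          (∀ (α : Fin n → ℤ) (a : A), a ∈ 𝒜 α →
            ℓ' a * (algebraMap A (Localization.Away e) e) ^ (bil ε α).toNat
              = algebraMap A (Localization.Away e) a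
                * (algebraMap A (Localization.Away e) e) ^ (-(bil ε α)).toNat) → ℓ' = ℓ :=
  stmt4_general 𝒜 bil ε e
end

section
/- Suppose ε ∈ ℤⁿ is real (⟨ε,ε⟩ = 1) and e ∈ A_ε is nonzero with the projector factorization property. Then the projection ℓ_e maps A onto A_{ε^⊥}: for every a ∈ A there exists a' ∈ A_{ε^⊥} such that ℓ_e(a) equals the image of a' under the canonical localization map A → A_e. -/
/-!
Write `d = χ α` for a homogeneous `a ∈ 𝒜 α`. If `d ≤ 0`, then `ℓ a` is the image of
`a * e ^ (-d)`, which has degree `α - d • ε` and so lies in `ε^⊥`. If `d > 0`, the projector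
factorization writes `a = e ^ d * f'` with `f'` of degree `α - d • ε`, and cancelling the unit
`e ^ d` in the localization gives `ℓ a = f'`. Linearity of `ℓ` extends this from homogeneous
elements to all of `A`.
-/

namespace GradedAlgebra

variable {ι k A : Type*} [AddCommGroup ι] [CommSemiring k] [CommRing A] [Algebra k A]
  (𝒜 : ι → Submodule k A) (χ : ι →ₗ[ℤ] ℤ)

theorem mem_iSup_ker_of_mem {γ : ι} (hγ : χ γ = 0) {x : A} (hx : x ∈ 𝒜 γ) :
    x ∈ ⨆ γ ∈ {γ : ι | χ γ = 0}, 𝒜 γ :=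
  Submodule.mem_iSup_of_mem γ (Submodule.mem_iSup_of_mem hγ hx)

variable {χ} {ε : ι} {e : A}

theorem exists_algebraMap_eq_of_nonpos [SetLike.GradedMonoid 𝒜] (hχ : χ ε = 1)
    (he : e ∈ 𝒜 ε) {α : ι} (hα : χ α ≤ 0) {a : A} (ha : a ∈ 𝒜 α)
    {x : Localization.Away e} (hx : x * algebraMap A _ e ^ (χ α).toNat =
      algebraMap A _ a * algebraMap A _ e ^ (-χ α).toNat) :
    ∃ a' ∈ ⨆ γ ∈ {γ : ι | χ γ = 0}, 𝒜 γ, x = algebraMap A _ a' := by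
  set c := (-χ α).toNat
  have hc : (c : ℤ) = -χ α := Int.toNat_of_nonneg (by omega)
  refine ⟨a * e ^ c, mem_iSup_ker_of_mem 𝒜 χ (γ := α + c • ε) ?_
    (SetLike.mul_mem_graded ha (SetLike.pow_mem_graded c he)), ?_⟩
  · rw [map_add, map_nsmul, hχ, nsmul_eq_mul, mul_one, hc, add_neg_cancel]
  · rwa [Int.toNat_of_nonpos hα, pow_zero, mul_one, ← map_pow, ← map_mul] at hx

theorem exists_algebraMap_eq_of_pos (hχ : χ ε = 1)
    (hproj : ∀ α : ι, 0 < χ α → ∀ f ∈ 𝒜 α,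
      ∃ f' ∈ 𝒜 (α - χ α • ε), f = e ^ (χ α).toNat * f')
    {α : ι} (hα : 0 < χ α) {a : A} (ha : a ∈ 𝒜 α) {x : Localization.Away e}
    (hx : x * algebraMap A _ e ^ (χ α).toNat =
      algebraMap A _ a * algebraMap A _ e ^ (-χ α).toNat) :
    ∃ a' ∈ ⨆ γ ∈ {γ : ι | χ γ = 0}, 𝒜 γ, x = algebraMap A _ a' := by
  obtain ⟨f', hf', rfl⟩ := hproj α hα a ha
  refine ⟨f', mem_iSup_ker_of_mem 𝒜 χ ?_ hf', ?_⟩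
  · rw [map_sub, map_zsmul, hχ, smul_eq_mul, mul_one, sub_self]
  · rw [Int.toNat_of_nonpos (by omega : -χ α ≤ 0), pow_zero, mul_one, map_mul, map_pow,
      mul_comm] at hx
    exact ((IsLocalization.Away.algebraMap_isUnit e).pow _).mul_left_cancel hx

end GradedAlgebra

open GradedAlgebra in
theorem stmt5_general {n : ℕ} {k A : Type*} [Field k] [CommRing A] [Algebra k A]
    (𝒜 : (Fin n → ℤ) → Submodule k A) [GradedAlgebra 𝒜]
    (bil : (Fin n → ℤ) →ₗ[ℤ] (Fin n → ℤ) →ₗ[ℤ] ℤ)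
    (ε : Fin n → ℤ) (hreal : bil ε ε = 1)
    (e : A) (he : e ∈ 𝒜 ε)
    (hproj : ∀ (α : Fin n → ℤ), 0 < bil ε α → ∀ f ∈ 𝒜 α,
        ∃ f' ∈ 𝒜 (α - bil ε α • ε), f = e ^ (bil ε α).toNat * f')
    (ℓ : A →ₗ[k] Localization.Away e)
    (hℓ : ∀ (α : Fin n → ℤ) (a : A), a ∈ 𝒜 α →
        ℓ a * (algebraMap A (Localization.Away e) e) ^ (bil ε α).toNat
          = algebraMap A (Localization.Away e) a
            * (algebraMap A (Localization.Away e) e) ^ (-(bil ε α)).toNat) :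
    ∀ a : A, ∃ a' ∈ (⨆ γ ∈ {γ : Fin n → ℤ | bil ε γ = 0}, 𝒜 γ),
      ℓ a = algebraMap A (Localization.Away e) a' := by
  intro a
  induction a using DirectSum.Decomposition.inductionOn 𝒜 with
  | zero => exact ⟨0, zero_mem _, by simp⟩
  | @homogeneous α a =>
    rcases le_or_gt (bil ε α) 0 with hα | hα
    · exact exists_algebraMap_eq_of_nonpos 𝒜 hreal he hα a.2 (hℓ α a a.2)
    · exact exists_algebraMap_eq_of_pos 𝒜 hreal hproj hα a.2 (hℓ α a a.2)
  | add x y hx hy =>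
    obtain ⟨x', hx', hℓx⟩ := hx
    obtain ⟨y', hy', hℓy⟩ := hy
    exact ⟨x' + y', add_mem hx' hy', by rw [map_add, map_add, hℓx, hℓy]⟩

theorem stmt5 {n : ℕ} {k A : Type*} [Field k] [CommRing A] [IsDomain A] [Algebra k A]
    (𝒜 : (Fin n → ℤ) → Submodule k A) [GradedAlgebra 𝒜]
    (bil : (Fin n → ℤ) →ₗ[ℤ] (Fin n → ℤ) →ₗ[ℤ] ℤ)
    (ε : Fin n → ℤ) (hreal : bil ε ε = 1)
    (e : A) (he0 : e ≠ 0) (he : e ∈ 𝒜 ε)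
    (hproj : ∀ (α : Fin n → ℤ), 0 < bil ε α → ∀ f ∈ 𝒜 α,
        ∃ f' ∈ 𝒜 (α - bil ε α • ε), f = e ^ (bil ε α).toNat * f')
    (ℓ : A →ₗ[k] Localization.Away e)
    (hℓ : ∀ (α : Fin n → ℤ) (a : A), a ∈ 𝒜 α →
        ℓ a * (algebraMap A (Localization.Away e) e) ^ (bil ε α).toNat
          = algebraMap A (Localization.Away e) a
            * (algebraMap A (Localization.Away e) e) ^ (-(bil ε α)).toNat) :
    ∀ a : A, ∃ a' ∈ (⨆ γ ∈ {γ : Fin n → ℤ | bil ε γ = 0}, 𝒜 γ),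
      ℓ a = algebraMap A (Localization.Away e) a' :=
  stmt5_general 𝒜 bil ε hreal e he hproj ℓ hℓ
end

section
/- Let p ≤ q be positive integers, let u be an index with 1 ≤ u ≤ p, and let r ∈ ℤ^q be a vector with r(u) = −1. Let φ be the q×q integer matrix obtained from the identity matrix by replacing its u-th row by r, and let φ_p be the p×p integer matrix obtained from the p×p identity matrix by replacing its u-th row by (r(1),…,r(p)). Then φ·φ = I_q and φ_p·φ_p = I_p; consequently, for every p×q matrix B with rational entries, the matrix φ_pᵀ·B·φ (with φ, φ_p regarded as rational matrices) has the same rank as B. In particular, matrix mutation of B-matrices is an involution and preserves the rank of the B-matrix. -/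
/-!
Both φ and φ_p are the identity with one row `s` replaced, where `s` has entry `-1` on the
diagonal. Multiplying such a matrix by itself changes only that row, which becomes
`s ᵥ* φ = -s + (s - eᵤ) = eᵤ`; so both are involutions. Involutions have determinant `±1`, hence
stay invertible over `ℚ`, and multiplying by invertible matrices on either side preserves rank.
-/

open Matrix

theorem Matrix.vecMul_updateRow_one_self {n R : Type*} [CommRing R] [Fintype n] [DecidableEq n]
    {v : n} {s : n → R} (hs : s v = -1) :
    s ᵥ* updateRow (1 : Matrix n n R) v s = (1 : Matrix n n R) v := by
  ext j
  rw [vecMul, dotProduct, ← Finset.add_sum_erase _ _ (Finset.mem_univ v), updateRow_self, hs,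
    Finset.sum_congr rfl fun k hk => by rw [updateRow_ne (Finset.ne_of_mem_erase hk)]]
  obtain rfl | hj := eq_or_ne j v
  · rw [Finset.sum_eq_zero fun k hk => by rw [one_apply_ne (Finset.ne_of_mem_erase hk), mul_zero],
      hs, one_apply_eq]
    ring
  · rw [Finset.sum_eq_single_of_mem j (by simp [hj]) fun k _ hk => by rw [one_apply_ne hk, mul_zero],
      one_apply_eq, one_apply_ne hj.symm]
    ring

theorem Matrix.updateRow_one_mul_self {n R : Type*} [CommRing R] [Fintype n] [DecidableEq n]
    {v : n} {s : n → R} (hs : s v = -1) :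
    updateRow (1 : Matrix n n R) v s * updateRow 1 v s = 1 := by
  rw [updateRow_mul, one_mul, updateRow_idem, vecMul_updateRow_one_self hs, updateRow_eq_self]

theorem Matrix.isUnit_det_map_intCast_of_mul_self_eq_one {n S : Type*} [CommRing S] [Fintype n]
    [DecidableEq n] {M : Matrix n n ℤ} (hM : M * M = 1) :
    IsUnit (M.map (Int.cast : ℤ → S)).det := by
  have := (isUnit_det_of_right_inverse hM).map (Int.castRingHom S)
  rwa [RingHom.map_det] at this

theorem Matrix.rank_transpose_mul_mul_of_isUnit_det {m n K : Type*} [Field K] [Fintype m]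
    [Fintype n] [DecidableEq m] [DecidableEq n] {A : Matrix m m K} {C : Matrix n n K}
    (hA : IsUnit A.det) (hC : IsUnit C.det) (B : Matrix m n K) :
    (Aᵀ * B * C).rank = B.rank := by
  rw [rank_mul_eq_left_of_isUnit_det _ _ hC,
    rank_mul_eq_right_of_isUnit_det _ _ (by rwa [det_transpose])]

theorem stmt6_general {p q : ℕ} (hpq : p ≤ q) (u : Fin p)
    (r : Fin q → ℤ) (hr : r (Fin.castLE hpq u) = -1) :
    let φ : Matrix (Fin q) (Fin q) ℤ := Matrix.updateRow 1 (Fin.castLE hpq u) r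
    let φp : Matrix (Fin p) (Fin p) ℤ :=
      Matrix.updateRow 1 u (fun i => r (Fin.castLE hpq i))
    φ * φ = 1 ∧ φp * φp = 1 ∧
      ∀ B : Matrix (Fin p) (Fin q) ℚ,
        ((φp.map (Int.cast : ℤ → ℚ)).transpose * B * φ.map (Int.cast : ℤ → ℚ)).rank
          = B.rank := by
  intro φ φp
  have hφ : φ * φ = 1 := updateRow_one_mul_self hr
  have hφp : φp * φp = 1 := updateRow_one_mul_self hr
  exact ⟨hφ, hφp, rank_transpose_mul_mul_of_isUnit_det
    (isUnit_det_map_intCast_of_mul_self_eq_one hφp) (isUnit_det_map_intCast_of_mul_self_eq_one hφ)⟩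

theorem stmt6 {p q : ℕ} (hp : 0 < p) (hpq : p ≤ q) (u : Fin p)
    (r : Fin q → ℤ) (hr : r (Fin.castLE hpq u) = -1) :
    let φ : Matrix (Fin q) (Fin q) ℤ := Matrix.updateRow 1 (Fin.castLE hpq u) r
    let φp : Matrix (Fin p) (Fin p) ℤ :=
      Matrix.updateRow 1 u (fun i => r (Fin.castLE hpq i))
    φ * φ = 1 ∧ φp * φp = 1 ∧
      ∀ B : Matrix (Fin p) (Fin q) ℚ,
        ((φp.map (Int.cast : ℤ → ℚ)).transpose * B * φ.map (Int.cast : ℤ → ℚ)).rank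
          = B.rank :=
  stmt6_general hpq u r hr
end

section
/- Let B be a p×q integer matrix (p ≤ q), u an index with 1 ≤ u ≤ p and B(u,u) = 0, and σ : {1,…,q} → ℤⁿ an assignment of integer vectors satisfying Σ_v B(t,v)·σ(v) = 0 for every t with 1 ≤ t ≤ p (a weight configuration). Let φ be the q×q integer matrix obtained from the identity by replacing its u-th row by the vector r with r(u) = −1 and r(v) = max(−B(u,v), 0) for v ≠ u, let φ_p be its upper-left p×p truncation, and set B' := φ_pᵀ·B·φ. Define σ' : {1,…,q} → ℤⁿ by σ'(u) = Σ_w max(B(u,w), 0)·σ(w) − σ(u) and σ'(v) = σ(v) for v ≠ u. Then Σ_v B'(t,v)·σ'(v) = 0 for every t with 1 ≤ t ≤ p; that is, the mutated pair (B', σ') is again a weight configuration, so mutation of weight configurations can be iterated. -/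
theorem stmt7 {p q m : ℕ} (hpq : p ≤ q) (B : Matrix (Fin p) (Fin q) ℤ)
    (u : Fin p) (hBuu : B u (Fin.castLE hpq u) = 0)
    (σ : Fin q → (Fin m → ℤ))
    (hσ : ∀ t : Fin p, ∑ v, B t v • σ v = 0) :
    let r : Fin q → ℤ := fun v => if v = Fin.castLE hpq u then -1 else max (-(B u v)) 0
    let φ : Matrix (Fin q) (Fin q) ℤ := Matrix.updateRow 1 (Fin.castLE hpq u) r
    let φp : Matrix (Fin p) (Fin p) ℤ :=
      Matrix.updateRow 1 u (fun i => r (Fin.castLE hpq i))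
    let B' : Matrix (Fin p) (Fin q) ℤ := φp.transpose * B * φ
    let σ' : Fin q → (Fin m → ℤ) := fun v =>
      if v = Fin.castLE hpq u then (∑ w, max (B u w) 0 • σ w) - σ (Fin.castLE hpq u) else σ v
    ∀ t : Fin p, ∑ v, B' t v • σ' v = 0 := by
  intro r φ φp B' σ' t
  -- key fact: φ applied to σ' gives back σ
  have key : ∀ j : Fin q, ∑ v, φ j v • σ' v = σ j := by
    intro j
    by_cases hj : j = Fin.castLE hpq u
    · subst hj
      have hφ : ∀ v, φ (Fin.castLE hpq u) v = r v := by
        intro v; simp [φ, Matrix.updateRow_self]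
      simp only [hφ]
      rw [← Finset.add_sum_erase _ _ (Finset.mem_univ (Fin.castLE hpq u))]
      have h1 : r (Fin.castLE hpq u) • σ' (Fin.castLE hpq u)
          = σ (Fin.castLE hpq u) - ∑ w, max (B u w) 0 • σ w := by
        simp only [r, σ', if_pos rfl, neg_smul, one_smul, neg_sub]
      have h2 : ∑ v ∈ Finset.univ.erase (Fin.castLE hpq u), r v • σ' v
          = ∑ v, max (-(B u v)) 0 • σ v := by
        rw [← Finset.add_sum_erase _ (fun v => max (-(B u v)) 0 • σ v)
          (Finset.mem_univ (Fin.castLE hpq u))]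
        have h0 : max (-(B u (Fin.castLE hpq u))) 0 = 0 := by rw [hBuu]; simp
        rw [h0, zero_smul, zero_add]
        refine Finset.sum_congr rfl fun v hv => ?_
        have hvU : v ≠ Fin.castLE hpq u := (Finset.mem_erase.mp hv).1
        simp only [r, σ', if_neg hvU]
      rw [h1, h2]
      have h3 : ∑ v, max (-(B u v)) 0 • σ v - ∑ w, max (B u w) 0 • σ w
          = - ∑ v, B u v • σ v := by
        rw [← Finset.sum_sub_distrib, ← Finset.sum_neg_distrib]
        refine Finset.sum_congr rfl fun v _ => ?_
        rw [← sub_smul, ← neg_smul]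
        congr 1
        omega
      have h4 : ∑ v, max (-(B u v)) 0 • σ v = ∑ w, max (B u w) 0 • σ w :=
        sub_eq_zero.mp (by rw [h3, hσ u, neg_zero])
      rw [h4]
      abel
    · have hφ : ∀ v, φ j v = if j = v then (1:ℤ) else 0 := by
        intro v; simp [φ, Matrix.updateRow_ne hj, Matrix.one_apply]
      simp only [hφ, ite_smul, one_smul, zero_smul]
      rw [Finset.sum_ite_eq _ j σ']
      simp [σ', hj]
  calc ∑ v, B' t v • σ' v
      = ∑ v, (∑ j, (φp.transpose * B) t j * φ j v) • σ' v := by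
        simp only [B', Matrix.mul_apply]
    _ = ∑ j, (φp.transpose * B) t j • ∑ v, φ j v • σ' v := by
        simp only [Finset.sum_smul, Finset.smul_sum, mul_smul]
        rw [Finset.sum_comm]
    _ = ∑ j, (∑ i, φp i t * B i j) • σ j := by
        simp only [key, Matrix.mul_apply, Matrix.transpose_apply]
    _ = ∑ i, ∑ j, (φp i t * B i j) • σ j := by
        simp only [Finset.sum_smul]
        exact Finset.sum_comm
    _ = ∑ i, φp i t • ∑ j, B i j • σ j := by
        refine Finset.sum_congr rfl fun i _ => ?_
        rw [Finset.smul_sum]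
        simp only [mul_smul]
    _ = 0 := by simp only [hσ, smul_zero, Finset.sum_const_zero]
end
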